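/- arXiv:1708.02130 — 3 statements merged into one kernel-verified Lean document; each statement's English description precedes it below -/
import Mathlib

section
/- For bit strings z,x ∈ {0,1}^l and m,m' ∈ {0,1}^l, Σ_{z,x ∈ {0,1}^l} Z^z X^x |m⟩⟨m'| (Z^z X^x)† equals 0 if m ≠ m', and equals 2^l · I if m = m'. -/
open Matrix

/-- The multi-qubit Pauli operator `Z^z X^x` on `l` qubits, acting on basis states by
`Z^z X^x |m⟩ = (-1)^{z·(m ⊕ x)} |m ⊕ x⟩`. -/
noncomputable def pauliZX (l : ℕ) (z x : Fin l → Bool) :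
    Matrix (Fin l → Bool) (Fin l → Bool) ℂ :=
  Matrix.of fun m' m =>
    if m' = fun i => xor (m i) (x i) then
      (-1 : ℂ) ^ (Finset.univ.filter fun i => z i && m' i).card
    else 0

/-! Conjugating by `Z^z X^x` sends `|m⟩⟨m'|` to `(-1)^{z·(m⊕x) + z·(m'⊕x)} |m⊕x⟩⟨m'⊕x|`.
Summing over `z`, orthogonality of the characters `z ↦ (-1)^{z·a}` of `(ℤ/2)^l` leaves `2^l` when
`m ⊕ x = m' ⊕ x`, i.e. `m = m'`, and `0` otherwise; summing `|m⊕x⟩⟨m⊕x|` over `x` gives the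
identity because `x ↦ m ⊕ x` is a bijection. -/

section BitStrings

variable {ι : Type*}

def bitXor (a b : ι → Bool) : ι → Bool := fun i => xor (a i) (b i)

lemma bitXor_involutive (a : ι → Bool) : Function.Involutive (bitXor a) := by
  intro b; funext i; simp [bitXor]

lemma bitXor_left_cancel_iff {a b c : ι → Bool} : bitXor a c = bitXor b c ↔ a = b := by
  refine ⟨fun h => funext fun i => ?_, fun h => h ▸ rfl⟩
  simpa [bitXor] using congrFun h i

variable [Fintype ι]

/-- The character `(-1)^{z·a}` of `(ℤ/2)^ι`. -/
def bitSign (z a : ι → Bool) : ℂ := (-1) ^ (Finset.univ.filter fun i => z i && a i).card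

lemma bitSign_eq_prod (z a : ι → Bool) :
    bitSign z a = ∏ i, if z i && a i then (-1 : ℂ) else 1 := by
  rw [Finset.prod_ite, Finset.prod_const, Finset.prod_const_one, mul_one, bitSign]

lemma star_bitSign (z a : ι → Bool) : star (bitSign z a) = bitSign z a := by
  simp [bitSign]

lemma sum_bitSign_mul_bitSign [DecidableEq ι] (a b : ι → Bool) :
    ∑ z, bitSign z a * bitSign z b = if a = b then (2 : ℂ) ^ Fintype.card ι else 0 := by
  have coord (s t : Bool) :
      ∑ r : Bool, (if r && s then (-1 : ℂ) else 1) * (if r && t then -1 else 1)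
        = if s = t then 2 else 0 := by
    cases s <;> cases t <;> norm_num
  calc ∑ z, bitSign z a * bitSign z b
      = ∏ i, ∑ r : Bool, (if r && a i then (-1 : ℂ) else 1) * (if r && b i then -1 else 1) := by
        simp only [bitSign_eq_prod, ← Finset.prod_mul_distrib, Fintype.prod_sum]
    _ = if a = b then (2 : ℂ) ^ Fintype.card ι else 0 := by
        simp only [coord, Finset.prod_ite_zero, Finset.prod_const, Finset.card_univ,
          Finset.mem_univ, forall_const, funext_iff]

end BitStrings

lemma pauliZX_apply (l : ℕ) (z x a b : Fin l → Bool) :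
    pauliZX l z x a b = if a = bitXor b x then bitSign z a else 0 := rfl

lemma pauliZX_mul_single (l : ℕ) (z x m m' : Fin l → Bool) (c : ℂ) :
    pauliZX l z x * single m m' c = single (bitXor m x) m' (bitSign z (bitXor m x) * c) := by
  ext a b
  simp only [mul_apply, single_apply, pauliZX_apply, ite_and, mul_ite, mul_zero,
    Finset.sum_ite_eq, Finset.mem_univ, if_true]
  by_cases h : a = bitXor m x
  · simp [h]
  · simp [h, Ne.symm h]

lemma pauliZX_mul_single_mul_conjTranspose (l : ℕ) (z x m m' : Fin l → Bool) :
    pauliZX l z x * single m m' 1 * (pauliZX l z x)ᴴ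
      = (bitSign z (bitXor m x) * bitSign z (bitXor m' x)) •
          single (bitXor m x) (bitXor m' x) 1 := by
  have single_mul_conjTranspose : single m m' (1 : ℂ) * (pauliZX l z x)ᴴ
      = single m (bitXor m' x) (bitSign z (bitXor m' x)) := by
    rw [← conjTranspose_conjTranspose (single m m' (1 : ℂ)), ← conjTranspose_mul,
      conjTranspose_single, pauliZX_mul_single, conjTranspose_single, star_mul, star_bitSign,
      star_star, one_mul]
  rw [Matrix.mul_assoc, single_mul_conjTranspose, pauliZX_mul_single,
    smul_single, smul_eq_mul, mul_one]

/-- Key computation of the Pauli mixing lemma: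
`Σ_{z,x} Z^z X^x |m⟩⟨m'| (Z^z X^x)†` is `0` if `m ≠ m'` and `2^l · I` if `m = m'`. -/
theorem pauli_twirl_stdBasis (l : ℕ) (m m' : Fin l → Bool) :
    ∑ z : Fin l → Bool, ∑ x : Fin l → Bool,
      pauliZX l z x * Matrix.single m m' (1 : ℂ) * (pauliZX l z x)ᴴ
    = if m = m' then
        ((2 : ℂ) ^ l) • (1 : Matrix (Fin l → Bool) (Fin l → Bool) ℂ)
      else 0 := by
  have sum_over_z (x : Fin l → Bool) :
      ∑ z, pauliZX l z x * single m m' (1 : ℂ) * (pauliZX l z x)ᴴ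
        = if m = m' then (2 : ℂ) ^ l • single (bitXor m x) (bitXor m x) 1 else 0 := by
    simp_rw [pauliZX_mul_single_mul_conjTranspose, ← Finset.sum_smul, sum_bitSign_mul_bitSign,
      bitXor_left_cancel_iff, Fintype.card_fin]
    split_ifs with h
    · rw [h]
    · rw [zero_smul]
  rw [Finset.sum_comm, Finset.sum_congr rfl fun x _ => sum_over_z x]
  split_ifs
  · rw [← Finset.smul_sum, ← sum_single_one,
      ← Equiv.sum_comp (bitXor_involutive m).toPerm fun a => single a a (1 : ℂ)]
    rfl
  · exact Finset.sum_const_zero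
end

section
/- Let B > 0, q, m positive integers, e ∈ ℤ_q^m, and D = D_{ℤ_q^m, B} the truncated discrete Gaussian. Then the total variation distance satisfies ‖D − (D+e)‖_{TV}² ≤ 2(1 − exp(−2π √m ‖e‖ / B)). In particular, if ‖e‖/B → 0 (as a function of a parameter λ, with ‖e‖√m/B negligible), the statistical distance between D and D+e is negligible. -/
/-!
In one coordinate, write `k = |c|`. On the common support of `D` and `D + c`, the triangle
inequality `|y - c| ≤ |y| + k` together with `|y|, |y - c| ≤ B` gives `|y - c|² - |y|² ≤ 2Bk`, so
the two densities differ there by a factor of at least `exp (-2πk/B) ≥ 1 - 2πk/B`. The points of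
the support of `D` whose shift leaves the support are at most `2k` in number; each has weight at
most `2e^{-π}`, while the normalizer is at least `(2B - 1)e^{-π}` because at least `2B - 1`
integers lie in `[-B, B]`. Hence `Σ |D - (D + c)| ≤ 2(2π + 2.2)k/B`, provided `2πk ≤ B log 2`.

The hybrid argument, `|pr - p'r'| ≤ p|r - r'| + |p - p'|r'` inducted over the coordinates, adds
these bounds, and Cauchy–Schwarz gives `Σ |eᵢ| ≤ √m‖e‖`, so the total variation distance is at
most `(2π + 2.2)X` with `X = √m‖e‖/B`. When `2πX ≤ log 2`, squaring this and using
`1 - e^{-t} ≥ t - t²/2` gives the claim; otherwise the right-hand side is at least `1`.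
-/

/-- The representative of `x : ZMod q` in `(−q/2, q/2]`. -/
def zrep (q : ℕ) [NeZero q] (x : ZMod q) : ℤ :=
  if 2 * (x.val : ℤ) ≤ (q : ℤ) then (x.val : ℤ) else (x.val : ℤ) - q

/-- The absolute value `|x|` of the representative of `x : ZMod q` in `(−q/2, q/2]`. -/
def zqabs (q : ℕ) [NeZero q] (x : ZMod q) : ℤ := |zrep q x|

/-- The truncated discrete Gaussian density over `ZMod q` with parameter `B`, supported on
`{x : |x| ≤ B}` with density proportional to `exp(−π|x|²/B²)`. -/
noncomputable def dGauss (q : ℕ) [NeZero q] (B : ℝ) (x : ZMod q) : ℝ :=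
  if (zqabs q x : ℝ) ≤ B then
    Real.exp (-Real.pi * (zqabs q x : ℝ) ^ 2 / B ^ 2) /
      (∑ y : ZMod q, if (zqabs q y : ℝ) ≤ B then
        Real.exp (-Real.pi * (zqabs q y : ℝ) ^ 2 / B ^ 2) else 0)
  else 0

/-- The `m`-fold product truncated discrete Gaussian density over `(ZMod q)^m`. -/
noncomputable def dGaussVec (q : ℕ) [NeZero q] (B : ℝ) (m : ℕ)
    (x : Fin m → ZMod q) : ℝ :=
  ∏ i, dGauss q B (x i)

/-- The Euclidean norm of a vector in `(ZMod q)^m` via representatives in `(−q/2, q/2]`. -/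
noncomputable def zqnorm (q : ℕ) [NeZero q] {m : ℕ} (e : Fin m → ZMod q) : ℝ :=
  Real.sqrt (∑ i, ((zqabs q (e i) : ℝ)) ^ 2)

open Finset Real

namespace ZMod

lemma valMinAbs_intCast_of_two_mul_abs_lt {n : ℕ} [NeZero n] {k : ℤ} (hk : 2 * |k| < n) :
    (k : ZMod n).valMinAbs = k := by
  refine (valMinAbs_spec _ k).2 ⟨rfl, ?_, ?_⟩ <;> linarith [le_abs_self k, neg_abs_le k]

end ZMod

section Representatives

variable {q : ℕ} [NeZero q]

lemma zrep_eq_valMinAbs (x : ZMod q) : zrep q x = x.valMinAbs := by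
  rw [zrep, ZMod.valMinAbs_def_pos]
  split_ifs <;> omega

lemma zqabs_eq_natAbs_valMinAbs (x : ZMod q) : zqabs q x = (x.valMinAbs.natAbs : ℤ) := by
  rw [zqabs, zrep_eq_valMinAbs, Int.natCast_natAbs]

lemma zqabs_nonneg (x : ZMod q) : 0 ≤ zqabs q x := abs_nonneg _

lemma zqabs_eq_zero_iff {x : ZMod q} : zqabs q x = 0 ↔ x = 0 := by
  rw [zqabs, zrep_eq_valMinAbs, abs_eq_zero, ZMod.valMinAbs_eq_zero]

lemma zqabs_sub_le (x y : ZMod q) : zqabs q (x - y) ≤ zqabs q x + zqabs q y := by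
  have h := (ZMod.natAbs_valMinAbs_add_le x (-y)).trans (Int.natAbs_add_le _ _)
  rw [ZMod.natAbs_valMinAbs_neg, ← sub_eq_add_neg] at h
  simp only [zqabs_eq_natAbs_valMinAbs]
  omega

lemma two_mul_zqabs_le (x : ZMod q) : 2 * zqabs q x ≤ q := by
  have := ZMod.natAbs_valMinAbs_le x
  rw [zqabs_eq_natAbs_valMinAbs]
  omega

lemma zqabs_intCast {k : ℤ} (hk : 2 * |k| < q) : zqabs q (k : ZMod q) = |k| := by
  rw [zqabs, zrep_eq_valMinAbs, ZMod.valMinAbs_intCast_of_two_mul_abs_lt hk]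

end Representatives

section Gaussian

variable {q : ℕ} [NeZero q] {B : ℝ}

variable (q) in
noncomputable def gaussWeight (B : ℝ) (x : ZMod q) : ℝ :=
  if (zqabs q x : ℝ) ≤ B then exp (-π * (zqabs q x : ℝ) ^ 2 / B ^ 2) else 0

variable (q) in
noncomputable def gaussMass (B : ℝ) : ℝ := ∑ y : ZMod q, gaussWeight q B y

lemma dGauss_eq_div (B : ℝ) (x : ZMod q) : dGauss q B x = gaussWeight q B x / gaussMass q B := by
  unfold dGauss gaussMass gaussWeight
  split_ifs <;> simp

lemma gaussWeight_nonneg (B : ℝ) (x : ZMod q) : 0 ≤ gaussWeight q B x := by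
  unfold gaussWeight
  split_ifs <;> positivity

lemma exp_neg_pi_le_gaussWeight (hB : 0 < B) {x : ZMod q} (hx : (zqabs q x : ℝ) ≤ B) :
    exp (-π) ≤ gaussWeight q B x := by
  have hx0 : (0 : ℝ) ≤ zqabs q x := mod_cast zqabs_nonneg x
  rw [gaussWeight, if_pos hx, exp_le_exp, le_div_iff₀ (by positivity)]
  nlinarith [pi_pos, pow_le_pow_left₀ hx0 hx 2]

lemma one_le_gaussMass (hB : 0 ≤ B) : 1 ≤ gaussMass q B := by
  have h0 : gaussWeight q B 0 = 1 := by simp [gaussWeight, zqabs_eq_zero_iff.2 rfl, hB]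
  exact h0 ▸ single_le_sum (fun y _ => gaussWeight_nonneg B y) (mem_univ 0)

lemma gaussMass_pos (hB : 0 ≤ B) : 0 < gaussMass q B :=
  one_pos.trans_le (one_le_gaussMass hB)

lemma dGauss_nonneg (B : ℝ) (x : ZMod q) : 0 ≤ dGauss q B x := by
  rw [dGauss_eq_div]
  exact div_nonneg (gaussWeight_nonneg B x) (sum_nonneg fun y _ => gaussWeight_nonneg B y)

lemma sum_dGauss (hB : 0 ≤ B) : ∑ y : ZMod q, dGauss q B y = 1 := by
  simp_rw [dGauss_eq_div, ← sum_div]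
  exact div_self (gaussMass_pos hB).ne'

lemma sum_dGauss_sub (hB : 0 ≤ B) (c : ZMod q) : ∑ y : ZMod q, dGauss q B (y - c) = 1 :=
  ((Equiv.subRight c).sum_comp (dGauss q B)).trans (sum_dGauss hB)

lemma dGaussVec_nonneg (B : ℝ) {m : ℕ} (x : Fin m → ZMod q) : 0 ≤ dGaussVec q B m x :=
  prod_nonneg fun i _ => dGauss_nonneg B (x i)

lemma sum_dGaussVec (hB : 0 ≤ B) (m : ℕ) : ∑ x : Fin m → ZMod q, dGaussVec q B m x = 1 := by
  simp only [dGaussVec, ← Fintype.prod_sum, sum_dGauss hB, prod_const_one]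

lemma two_mul_sub_one_mul_exp_neg_pi_le_gaussMass (hB : 0 < B) (hq : 2 * B < q) :
    (2 * B - 1) * exp (-π) ≤ gaussMass q B := by
  set K := ⌊B⌋
  have hK : 0 ≤ K := Int.floor_nonneg.2 hB.le
  have hKB : (K : ℝ) ≤ B := Int.floor_le B
  have hsmall : ∀ k ∈ Icc (-K) K, 2 * |k| < q := fun k hk => by
    have : ((|k| : ℤ) : ℝ) ≤ K := mod_cast abs_le.2 (mem_Icc.1 hk)
    exact_mod_cast (show (2 * |k| : ℝ) < q by linarith)
  have hinj : Set.InjOn (fun k : ℤ => (k : ZMod q)) (Icc (-K) K) := fun k hk l hl hkl => by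
    rw [← ZMod.valMinAbs_intCast_of_two_mul_abs_lt (hsmall k hk),
      ← ZMod.valMinAbs_intCast_of_two_mul_abs_lt (hsmall l hl)]
    exact congrArg ZMod.valMinAbs hkl
  have hcard : (#(Icc (-K) K) : ℝ) = 2 * K + 1 := by
    have : (#(Icc (-K) K) : ℤ) = 2 * K + 1 := by rw [Int.card_Icc]; omega
    exact_mod_cast this
  calc (2 * B - 1) * exp (-π) ≤ #(Icc (-K) K) * exp (-π) := by
        rw [hcard]
        gcongr
        linarith [Int.sub_one_lt_floor B]
    _ ≤ ∑ k ∈ Icc (-K) K, gaussWeight q B k := by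
        rw [← nsmul_eq_mul]
        refine card_nsmul_le_sum _ _ _ fun k hk => exp_neg_pi_le_gaussWeight hB ?_
        rw [zqabs_intCast (hsmall k hk)]
        exact (Int.cast_le.2 (abs_le.2 (mem_Icc.1 hk))).trans hKB
    _ = ∑ y ∈ (Icc (-K) K).image (fun k : ℤ => (k : ZMod q)), gaussWeight q B y :=
        (sum_image hinj).symm
    _ ≤ gaussMass q B :=
        sum_le_sum_of_subset_of_nonneg (subset_univ _) fun y _ _ => gaussWeight_nonneg B y

end Gaussian

lemma sum_abs_sub_eq_two_mul_sum_posPart {ι : Type*} (s : Finset ι) (f g : ι → ℝ)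
    (h : ∑ i ∈ s, f i = ∑ i ∈ s, g i) :
    ∑ i ∈ s, |f i - g i| = 2 * ∑ i ∈ s, (f i - g i)⁺ := by
  have habs (a : ℝ) : |a| = 2 * a⁺ - a := by
    linarith [posPart_add_negPart a, posPart_sub_negPart a]
  simp only [habs, sum_sub_distrib, ← mul_sum, h, sub_self, sub_zero]

lemma exp_neg_mul_exp_le_exp {a b k B : ℝ} (hB : 0 < B) (hk : 0 ≤ k) (ha0 : 0 ≤ a)
    (hb0 : 0 ≤ b) (ha : a ≤ B) (hb : b ≤ B) (hab : b ≤ a + k) :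
    exp (-(2 * π * k / B)) * exp (-π * a ^ 2 / B ^ 2) ≤ exp (-π * b ^ 2 / B ^ 2) := by
  have hsq : b ^ 2 - a ^ 2 ≤ 2 * k * B := by nlinarith
  rw [← exp_add, exp_le_exp, show -(2 * π * k / B) = -(2 * π * k * B) / B ^ 2 by field_simp,
    ← add_div, div_le_div_iff_of_pos_right (by positivity)]
  nlinarith [mul_le_mul_of_nonneg_left hsq pi_pos.le]

lemma exp_neg_pi_mul_sq_div_le {a b k B : ℝ} (hB : 0 < B) (hb : B < b) (hab : b ≤ a + k)
    (hs : 2 * π * k ≤ log 2 * B) : exp (-π * a ^ 2 / B ^ 2) ≤ 2 * exp (-π) := by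
  have hk : k < B := by nlinarith [pi_gt_three, log_two_lt_d9]
  have hsq : B ^ 2 - 2 * B * k ≤ a ^ 2 := by nlinarith [sq_nonneg k]
  calc exp (-π * a ^ 2 / B ^ 2) ≤ exp (log 2 + -π) := by
        rw [exp_le_exp, div_le_iff₀ (by positivity)]
        nlinarith [mul_le_mul_of_nonneg_left hsq pi_pos.le, mul_le_mul_of_nonneg_left hs hB.le]
    _ = 2 * exp (-π) := by rw [exp_add, exp_log two_pos]

section SingleCoordinate

variable {q : ℕ} [NeZero q] {B : ℝ}

variable (q) in
noncomputable def shiftBoundary (B : ℝ) (c : ZMod q) : Finset (ZMod q) :=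
  {y | (zqabs q y : ℝ) ≤ B ∧ B < zqabs q (y - c)}

lemma mem_shiftBoundary {c y : ZMod q} :
    y ∈ shiftBoundary q B c ↔ (zqabs q y : ℝ) ≤ B ∧ B < zqabs q (y - c) := by
  simp [shiftBoundary]

lemma card_shiftBoundary_le (c : ZMod q) : (#(shiftBoundary q B c) : ℝ) ≤ 2 * zqabs q c := by
  set K := ⌊B⌋
  set k := zqabs q c
  have hmaps : ∀ y ∈ shiftBoundary q B c, y.valMinAbs ∈ Ioc (K - k) K ∪ Ico (-K) (k - K) := by
    intro y hy
    rw [mem_shiftBoundary] at hy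
    have hle : zqabs q y ≤ K := Int.le_floor.2 hy.1
    have hlt : K < zqabs q y + k := by
      have : (zqabs q (y - c) : ℝ) ≤ zqabs q y + k := mod_cast zqabs_sub_le y c
      exact_mod_cast (Int.floor_le B).trans_lt (hy.2.trans_le this)
    rw [zqabs, zrep_eq_valMinAbs] at hle hlt
    simp only [mem_union, mem_Ioc, mem_Ico]
    rcases abs_cases y.valMinAbs with ⟨h, _⟩ | ⟨h, _⟩ <;> rw [h] at hle hlt <;> omega
  have hcard := card_le_card_of_injOn _ hmaps ZMod.injective_valMinAbs.injOn
  have hunion := card_union_le (Ioc (K - k) K) (Ico (-K) (k - K))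
  rw [Int.card_Ioc, Int.card_Ico] at hunion
  have hk := zqabs_nonneg c
  exact_mod_cast (show (#(shiftBoundary q B c) : ℤ) ≤ 2 * k by omega)

lemma sum_dGauss_shiftBoundary_le (hB : 0 < B) (c : ZMod q) (hs : 2 * π * zqabs q c ≤ log 2 * B) :
    ∑ y ∈ shiftBoundary q B c, dGauss q B y ≤ 2.2 * zqabs q c / B := by
  rcases (shiftBoundary q B c).eq_empty_or_nonempty with hempty | ⟨y₀, hy₀⟩
  · rw [hempty, sum_empty]
    have := zqabs_nonneg c
    positivity
  rw [mem_shiftBoundary] at hy₀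
  have hq : 2 * B < q := by
    have : (2 * zqabs q (y₀ - c) : ℝ) ≤ q := mod_cast two_mul_zqabs_le (y₀ - c)
    linarith [hy₀.2]
  -- the boundary is empty when `c = 0`
  have hk : (1 : ℝ) ≤ zqabs q c := by
    have hc : c ≠ 0 := by
      rintro rfl
      simp only [sub_zero] at hy₀
      linarith [hy₀.1, hy₀.2]
    have := zqabs_nonneg c
    have := mt zqabs_eq_zero_iff.1 hc
    exact_mod_cast (show 1 ≤ zqabs q c by omega)
  have hB6 : 6 ≤ B := by nlinarith [pi_gt_three, log_two_lt_d9]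
  have hmass := two_mul_sub_one_mul_exp_neg_pi_le_gaussMass hB hq
  have hpoint : ∀ y ∈ shiftBoundary q B c, dGauss q B y ≤ 2 * exp (-π) / gaussMass q B := by
    intro y hy
    rw [mem_shiftBoundary] at hy
    rw [dGauss_eq_div, gaussWeight, if_pos hy.1]
    exact div_le_div_of_nonneg_right
      (exp_neg_pi_mul_sq_div_le hB hy.2 (by exact_mod_cast zqabs_sub_le y c) hs)
      (gaussMass_pos hB.le).le
  calc ∑ y ∈ shiftBoundary q B c, dGauss q B y
      ≤ #(shiftBoundary q B c) * (2 * exp (-π) / gaussMass q B) := by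
        rw [← nsmul_eq_mul]
        exact sum_le_card_nsmul _ _ _ hpoint
    _ ≤ 2 * zqabs q c * (2 / (2 * B - 1)) := by
        refine mul_le_mul (card_shiftBoundary_le c) ?_
          (div_nonneg (by positivity) (gaussMass_pos hB.le).le) (by linarith)
        rw [div_le_div_iff₀ (gaussMass_pos hB.le) (by linarith)]
        linarith
    _ ≤ 2.2 * zqabs q c / B := by
        rw [mul_div_assoc', div_le_div_iff₀ (by linarith) hB]
        nlinarith

lemma posPart_dGauss_sub_le (hB : 0 < B) (c y : ZMod q) :
    (dGauss q B y - dGauss q B (y - c))⁺ ≤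
      2 * π * zqabs q c / B * dGauss q B y +
        if y ∈ shiftBoundary q B c then dGauss q B y else 0 := by
  have hDy := dGauss_nonneg B y
  have hDyc := dGauss_nonneg B (y - c)
  have hk : (0 : ℝ) ≤ zqabs q c := mod_cast zqabs_nonneg c
  have hcoef : 0 ≤ 2 * π * zqabs q c / B := by positivity
  by_cases hy : (zqabs q y : ℝ) ≤ B
  · by_cases hyc : (zqabs q (y - c) : ℝ) ≤ B
    · rw [if_neg (by simp [mem_shiftBoundary, hyc]), add_zero, posPart_def]
      have hshift : exp (-(2 * π * zqabs q c / B)) * dGauss q B y ≤ dGauss q B (y - c) := by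
        rw [dGauss_eq_div, dGauss_eq_div, gaussWeight, gaussWeight, if_pos hy, if_pos hyc,
          mul_div_assoc']
        exact div_le_div_of_nonneg_right
          (exp_neg_mul_exp_le_exp hB hk (mod_cast zqabs_nonneg y) (mod_cast zqabs_nonneg (y - c))
            hy hyc (by exact_mod_cast zqabs_sub_le y c))
          (gaussMass_pos hB.le).le
      have hexp := add_one_le_exp (-(2 * π * zqabs q c / B))
      refine sup_le ?_ (by positivity)
      nlinarith [mul_le_mul_of_nonneg_right hexp hDy]
    · rw [if_pos (mem_shiftBoundary.2 ⟨hy, not_le.1 hyc⟩), posPart_def]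
      exact sup_le (by nlinarith [mul_nonneg hcoef hDy]) (by positivity)
  · have hDy0 : dGauss q B y = 0 := by rw [dGauss_eq_div, gaussWeight, if_neg hy, zero_div]
    rw [if_neg (by simp [mem_shiftBoundary, hy]), hDy0, mul_zero, add_zero]
    exact (posPart_eq_zero.2 (by linarith)).le

lemma sum_abs_dGauss_sub_le (hB : 0 < B) (c : ZMod q) (hs : 2 * π * zqabs q c ≤ log 2 * B) :
    ∑ y : ZMod q, |dGauss q B y - dGauss q B (y - c)| ≤
      2 * ((2 * π + 2.2) * zqabs q c / B) := by
  rw [sum_abs_sub_eq_two_mul_sum_posPart _ _ _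
    ((sum_dGauss hB.le).trans (sum_dGauss_sub hB.le c).symm)]
  gcongr 2 * ?_
  calc ∑ y : ZMod q, (dGauss q B y - dGauss q B (y - c))⁺
      ≤ ∑ y : ZMod q, (2 * π * zqabs q c / B * dGauss q B y +
          if y ∈ shiftBoundary q B c then dGauss q B y else 0) :=
        sum_le_sum fun y _ => posPart_dGauss_sub_le hB c y
    _ = 2 * π * zqabs q c / B + ∑ y ∈ shiftBoundary q B c, dGauss q B y := by
        rw [sum_add_distrib, ← mul_sum, sum_dGauss hB.le, mul_one, sum_ite_mem, univ_inter]
    _ ≤ 2 * π * zqabs q c / B + 2.2 * zqabs q c / B := by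
        gcongr
        exact sum_dGauss_shiftBoundary_le hB c hs
    _ = (2 * π + 2.2) * zqabs q c / B := by ring

end SingleCoordinate

lemma sum_abs_sub_le_sum_add_sum {ι : Type*} (s : Finset ι) {f g : ι → ℝ}
    (hf : ∀ i ∈ s, 0 ≤ f i) (hg : ∀ i ∈ s, 0 ≤ g i) :
    ∑ i ∈ s, |f i - g i| ≤ ∑ i ∈ s, f i + ∑ i ∈ s, g i := by
  rw [← sum_add_distrib]
  exact sum_le_sum fun i hi =>
    abs_sub_le_iff.2 ⟨by linarith [hg i hi], by linarith [hf i hi]⟩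

lemma sum_abs_mul_sub_mul_le {α β : Type*} [Fintype α] [Fintype β] {p p' : α → ℝ}
    {r r' : β → ℝ} (hp : ∀ a, 0 ≤ p a) (hp1 : ∑ a, p a ≤ 1) (hr' : ∀ b, 0 ≤ r' b)
    (hr'1 : ∑ b, r' b ≤ 1) :
    ∑ a, ∑ b, |p a * r b - p' a * r' b| ≤ ∑ a, |p a - p' a| + ∑ b, |r b - r' b| := by
  have hpoint (a : α) (b : β) :
      |p a * r b - p' a * r' b| ≤ p a * |r b - r' b| + |p a - p' a| * r' b :=
    calc |p a * r b - p' a * r' b| = |p a * (r b - r' b) + (p a - p' a) * r' b| := by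
          congr 1; ring
      _ ≤ |p a * (r b - r' b)| + |(p a - p' a) * r' b| := abs_add_le _ _
      _ = p a * |r b - r' b| + |p a - p' a| * r' b := by
          rw [abs_mul, abs_mul, abs_of_nonneg (hp a), abs_of_nonneg (hr' b)]
  calc ∑ a, ∑ b, |p a * r b - p' a * r' b|
      ≤ ∑ a, ∑ b, (p a * |r b - r' b| + |p a - p' a| * r' b) :=
        sum_le_sum fun a _ => sum_le_sum fun b _ => hpoint a b
    _ = (∑ a, p a) * ∑ b, |r b - r' b| + (∑ a, |p a - p' a|) * ∑ b, r' b := by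
        simp only [sum_add_distrib, ← mul_sum, ← sum_mul]
    _ ≤ 1 * ∑ b, |r b - r' b| + (∑ a, |p a - p' a|) * 1 := by
        gcongr
    _ = ∑ a, |p a - p' a| + ∑ b, |r b - r' b| := by ring

lemma sum_abs_prod_sub_prod_le {α : Type*} [Fintype α] {m : ℕ} {a b : Fin m → α → ℝ}
    (ha : ∀ i y, 0 ≤ a i y) (ha1 : ∀ i, ∑ y, a i y ≤ 1) (hb : ∀ i y, 0 ≤ b i y)
    (hb1 : ∀ i, ∑ y, b i y ≤ 1) :
    ∑ x : Fin m → α, |∏ i, a i (x i) - ∏ i, b i (x i)| ≤ ∑ i, ∑ y, |a i y - b i y| := by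
  induction m with
  | zero => simp
  | succ n ih =>
    rw [← (Fin.consEquiv fun _ => α).sum_comp, Fintype.sum_prod_type, Fin.sum_univ_succ]
    simp only [Fin.consEquiv_apply, Fin.prod_univ_succ, Fin.cons_zero, Fin.cons_succ]
    have htail : ∑ x : Fin n → α, ∏ i, b i.succ (x i) ≤ 1 := by
      rw [← Fintype.prod_sum]
      exact prod_le_one (fun i _ => sum_nonneg fun y _ => hb _ y) fun i _ => hb1 _
    refine (sum_abs_mul_sub_mul_le (ha 0) (ha1 0) (fun x => prod_nonneg fun i _ => hb _ _)
      htail).trans ?_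
    gcongr
    exact ih (fun i => ha i.succ) (fun i => ha1 i.succ) (fun i => hb i.succ) fun i => hb1 i.succ

lemma sum_zqabs_le_sqrt_mul_zqnorm {q m : ℕ} [NeZero q] (e : Fin m → ZMod q) :
    ∑ i, (zqabs q (e i) : ℝ) ≤ √m * zqnorm q e := by
  rw [zqnorm, ← sqrt_mul (Nat.cast_nonneg m)]
  apply le_sqrt_of_sq_le
  simpa using sq_sum_le_card_mul_sum_sq (s := univ) (f := fun i => (zqabs q (e i) : ℝ))

lemma tv_dGaussVec_sub_le {q m : ℕ} [NeZero q] {B : ℝ} (hB : 0 < B) (e : Fin m → ZMod q)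
    (hs : 2 * π * (√m * zqnorm q e / B) ≤ log 2) :
    1 / 2 * ∑ x : Fin m → ZMod q, |dGaussVec q B m x - dGaussVec q B m (x - e)| ≤
      (2 * π + 2.2) * (√m * zqnorm q e / B) := by
  rw [← mul_div_assoc, div_le_iff₀ hB] at hs
  have hcoord (i : Fin m) : 2 * π * zqabs q (e i) ≤ log 2 * B := by
    refine le_trans ?_ hs
    gcongr
    exact (single_le_sum (fun j _ => Int.cast_nonneg (zqabs_nonneg (e j))) (mem_univ i)).trans
      (sum_zqabs_le_sqrt_mul_zqnorm e)
  calc 1 / 2 * ∑ x : Fin m → ZMod q, |dGaussVec q B m x - dGaussVec q B m (x - e)|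
      ≤ 1 / 2 * ∑ i, ∑ y, |dGauss q B y - dGauss q B (y - e i)| := by
        gcongr
        exact sum_abs_prod_sub_prod_le (a := fun _ => dGauss q B)
          (b := fun i y => dGauss q B (y - e i)) (fun _ => dGauss_nonneg B)
          (fun _ => (sum_dGauss hB.le).le) (fun _ _ => dGauss_nonneg B _)
          (fun i => (sum_dGauss_sub hB.le (e i)).le)
    _ ≤ 1 / 2 * ∑ i, 2 * ((2 * π + 2.2) * zqabs q (e i) / B) := by
        gcongr with i
        exact sum_abs_dGauss_sub_le hB (e i) (hcoord i)
    _ = (2 * π + 2.2) / B * ∑ i, (zqabs q (e i) : ℝ) := by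
        rw [mul_sum, mul_sum]
        exact sum_congr rfl fun i _ => by ring
    _ ≤ (2 * π + 2.2) / B * (√m * zqnorm q e) := by
        gcongr
        exact sum_zqabs_le_sqrt_mul_zqnorm e
    _ = (2 * π + 2.2) * (√m * zqnorm q e / B) := by ring

lemma exp_neg_le_one_sub_add_sq_div_two {t : ℝ} (ht : 0 ≤ t) : exp (-t) ≤ 1 - t + t ^ 2 / 2 := by
  have hexp : 1 + t + t ^ 2 / 2 ≤ exp t := by
    simpa [sum_range_succ, Nat.factorial] using sum_le_exp_of_nonneg ht 3
  have hpos : 0 < 1 - t + t ^ 2 / 2 := by nlinarith [sq_nonneg (t - 1)]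
  rw [exp_neg, inv_le_iff_one_le_mul₀ (exp_pos t)]
  -- `(1 + t + t²/2)(1 - t + t²/2) = 1 + t⁴/4`
  nlinarith [mul_le_mul_of_nonneg_right hexp hpos.le, pow_nonneg ht 4]

lemma sq_le_two_mul_one_sub_exp_neg {X : ℝ} (hX : 0 ≤ X) (hs : 2 * π * X ≤ log 2) :
    ((2 * π + 2.2) * X) ^ 2 ≤ 2 * (1 - exp (-(2 * π * X))) := by
  have hquad := exp_neg_le_one_sub_add_sq_div_two (by positivity : 0 ≤ 2 * π * X)
  have hπ := pi_gt_d6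
  have hπ' := pi_lt_d2
  have hlin : X * ((2 * π + 2.2) ^ 2 + 4 * π ^ 2) ≤ 4 * π := by
    have hC : (2 * π + 2.2) ^ 2 + 4 * π ^ 2 ≤ 112 := by nlinarith
    nlinarith [mul_le_mul_of_nonneg_left hC hX, log_two_lt_d9]
  nlinarith [mul_le_mul_of_nonneg_left hlin hX]

/-- Total variation bound for shifted truncated discrete Gaussians:
`‖D − (D+e)‖_TV² ≤ 2(1 − exp(−2π√m‖e‖/B))`, where `(D+e)(x) = D(x−e)`. -/
theorem tv_discrete_gaussian_shift (q m : ℕ) [NeZero q] (B : ℝ) (hB : 0 < B)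
    (e : Fin m → ZMod q) :
    ((1 / 2) * ∑ x : Fin m → ZMod q,
        |dGaussVec q B m x - dGaussVec q B m (x - e)|) ^ 2 ≤
      2 * (1 - Real.exp (-(2 * Real.pi * Real.sqrt m * zqnorm q e) / B)) := by
  set X := √m * zqnorm q e / B
  have hX : 0 ≤ X := div_nonneg (mul_nonneg (sqrt_nonneg _) (sqrt_nonneg _)) hB.le
  have hTV : 0 ≤ 1 / 2 * ∑ x : Fin m → ZMod q, |dGaussVec q B m x - dGaussVec q B m (x - e)| := by
    positivity
  rw [show -(2 * π * √m * zqnorm q e) / B = -(2 * π * X) by ring]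
  rcases le_total (2 * π * X) (log 2) with hsmall | hlarge
  · exact (pow_le_pow_left₀ hTV (tv_dGaussVec_sub_le hB e hsmall) 2).trans
      (sq_le_two_mul_one_sub_exp_neg hX hsmall)
  · have hTV1 : 1 / 2 * ∑ x : Fin m → ZMod q,
        |dGaussVec q B m x - dGaussVec q B m (x - e)| ≤ 1 := by
      have hsum := sum_abs_sub_le_sum_add_sum univ (f := dGaussVec q B m)
        (g := fun x => dGaussVec q B m (x - e)) (fun x _ => dGaussVec_nonneg B x)
        (fun x _ => dGaussVec_nonneg B (x - e))
      have hshift : ∑ x : Fin m → ZMod q, dGaussVec q B m (x - e) = 1 :=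
        ((Equiv.subRight e).sum_comp _).trans (sum_dGaussVec hB.le m)
      rw [sum_dGaussVec hB.le, hshift] at hsum
      linarith
    have hexp : exp (-(2 * π * X)) ≤ 1 / 2 :=
      calc exp (-(2 * π * X)) ≤ exp (-log 2) := exp_le_exp.2 (neg_le_neg hlarge)
        _ = 1 / 2 := by rw [exp_neg, exp_log two_pos, one_div]
    nlinarith
end

section
/- The Toffoli gate conjugates a 3-qubit Pauli operator into a product of a Clifford and a Pauli: T (Z^{z_1}X^{x_1} ⊗ Z^{z_2}X^{x_2} ⊗ Z^{z_3}X^{x_3}) T† = CNOT_{1,3}^{x_2} · CNOT_{2,3}^{x_1} · Ẑ_{1,2}^{z_3} · (Z^{z_1+x_2 z_3}X^{x_1} ⊗ Z^{z_2+x_1 z_3}X^{x_2} ⊗ Z^{z_3}X^{x_1 x_2 + x_3}), for all bits z_1,z_2,z_3,x_1,x_2,x_3 ∈ {0,1}. -/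
open Matrix Kronecker

/-- The single-qubit Pauli operator `Z^z X^x`, acting on basis states by
`Z^z X^x |m⟩ = (-1)^{z·(m ⊕ x)} |m ⊕ x⟩`. -/
def zxGate (z x : Bool) : Matrix Bool Bool ℂ :=
  Matrix.of fun m' m =>
    if m' = xor m x then (if z && m' then -1 else 1) else 0

/-- The Toffoli gate `|a,b,c⟩ ↦ |a,b,c ⊕ ab⟩` on three qubits. -/
def toffoli : Matrix (Bool × Bool × Bool) (Bool × Bool × Bool) ℂ :=
  Matrix.of fun p p' =>
    if p = (p'.1, p'.2.1, xor p'.2.2 (p'.1 && p'.2.1)) then 1 else 0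

/-- CNOT with control qubit 1 and target qubit 3. -/
def cnot13 : Matrix (Bool × Bool × Bool) (Bool × Bool × Bool) ℂ :=
  Matrix.of fun p p' => if p = (p'.1, p'.2.1, xor p'.2.2 p'.1) then 1 else 0

/-- CNOT with control qubit 2 and target qubit 3. -/
def cnot23 : Matrix (Bool × Bool × Bool) (Bool × Bool × Bool) ℂ :=
  Matrix.of fun p p' => if p = (p'.1, p'.2.1, xor p'.2.2 p'.2.1) then 1 else 0

/-- The controlled-phase gate `Ẑ` on qubits 1 and 2: `Ẑ|a,b,c⟩ = (−1)^{ab}|a,b,c⟩`. -/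
def cz12 : Matrix (Bool × Bool × Bool) (Bool × Bool × Bool) ℂ :=
  Matrix.of fun p p' =>
    if p = p' then (if p.1 && p.2.1 then -1 else 1) else 0

/-- generalized permutation matrix with ±1 phases -/
def gp {I : Type*} [DecidableEq I] (σ : I → I) (φ : I → Bool) : Matrix I I ℂ :=
  Matrix.of fun p p' => if p = σ p' then (if φ p' then -1 else 1) else 0

lemma phase_mul (a b : Bool) :
    (if a then (-1:ℂ) else 1) * (if b then -1 else 1) = if xor a b then -1 else 1 := by
  cases a <;> cases b <;> norm_num

lemma gp_mul {I : Type*} [DecidableEq I] [Fintype I] (σ τ : I → I) (φ ψ : I → Bool) :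
    gp σ φ * gp τ ψ = gp (fun p => σ (τ p)) (fun p => xor (φ (τ p)) (ψ p)) := by
  ext p p'
  rw [Matrix.mul_apply]
  rw [Finset.sum_eq_single (τ p')]
  · simp only [gp, Matrix.of_apply]
    by_cases h : p = σ (τ p')
    · simp only [h, if_true, eq_self_iff_true, if_pos]
      exact phase_mul _ _
    · simp [h]
  · intro q _ hq
    simp [gp, hq]
  · simp

lemma gp_kron {I J : Type*} [DecidableEq I] [DecidableEq J] (σ1 : I → I) (σ2 : J → J) (φ1 : I → Bool) (φ2 : J → Bool) :
    gp σ1 φ1 ⊗ₖ gp σ2 φ2 =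
      gp (Prod.map σ1 σ2) (fun p => xor (φ1 p.1) (φ2 p.2)) := by
  ext ⟨i1,i2⟩ ⟨j1,j2⟩
  simp only [gp, Matrix.kroneckerMap_apply, Matrix.of_apply, Prod.map, Prod.mk.injEq, Prod.ext_iff]
  by_cases h1 : i1 = σ1 j1
  · by_cases h2 : i2 = σ2 j2
    · simp only [h1, h2, and_self, if_true, eq_self_iff_true, if_pos]
      exact phase_mul _ _
    · simp [h1, h2]
  · simp [h1]

lemma gp_pow_bool {I : Type*} [DecidableEq I] [Fintype I] (σ : I → I) (φ : I → Bool) (b : Bool) :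
    gp σ φ ^ b.toNat = gp (fun p => if b then σ p else p) (fun p => b && φ p) := by
  cases b
  · simp only [Bool.toNat_false, pow_zero]
    ext p p'
    simp [gp, Matrix.one_apply, eq_comm]
  · simp only [Bool.toNat_true, pow_one]
    rfl

lemma gp_congr {I : Type*} [DecidableEq I] (σ σ' : I → I) (φ φ' : I → Bool)
    (h1 : ∀ p, σ p = σ' p) (h2 : ∀ p, φ p = φ' p) : gp σ φ = gp σ' φ' := by
  have : σ = σ' := funext h1
  have : φ = φ' := funext h2
  subst this; subst ‹σ = σ'›; rfl

lemma zx_eq (z x : Bool) : zxGate z x = gp (fun m => xor m x) (fun m => z && xor m x) := by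
  ext m' m
  by_cases h : m' = xor m x <;> simp [gp, zxGate, h]

lemma toffoli_eq : toffoli = gp (fun p => (p.1, p.2.1, xor p.2.2 (p.1 && p.2.1))) (fun _ => false) := by
  ext p p'; simp [gp, toffoli]

lemma cnot13_eq : cnot13 = gp (fun p => (p.1, p.2.1, xor p.2.2 p.1)) (fun _ => false) := by
  ext p p'; simp [gp, cnot13]

lemma cnot23_eq : cnot23 = gp (fun p => (p.1, p.2.1, xor p.2.2 p.2.1)) (fun _ => false) := by
  ext p p'; simp [gp, cz12, cnot23]

lemma cz12_eq : cz12 = gp id (fun p => p.1 && p.2.1) := by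
  ext p p'
  by_cases h : p = p' <;> simp [gp, cz12, h]

lemma toffoli_herm : toffoliᴴ = toffoli := by
  ext ⟨a,b,c⟩ ⟨d,e,f⟩
  simp only [toffoli, Matrix.conjTranspose_apply, Matrix.of_apply]
  rcases a <;> rcases b <;> rcases c <;> rcases d <;> rcases e <;> rcases f <;> norm_num

/-- Toffoli conjugation of a 3-qubit Pauli:
`T (Z^{z₁}X^{x₁} ⊗ Z^{z₂}X^{x₂} ⊗ Z^{z₃}X^{x₃}) T† =
 CNOT₁₃^{x₂} CNOT₂₃^{x₁} Ẑ₁₂^{z₃} (Z^{z₁+x₂z₃}X^{x₁} ⊗ Z^{z₂+x₁z₃}X^{x₂} ⊗ Z^{z₃}X^{x₁x₂+x₃})`,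
with the Z-exponents taken mod 2. -/
theorem toffoli_pauli_conjugation (z1 z2 z3 x1 x2 x3 : Bool) :
    toffoli * (zxGate z1 x1 ⊗ₖ (zxGate z2 x2 ⊗ₖ zxGate z3 x3)) * toffoliᴴ =
      cnot13 ^ x2.toNat * cnot23 ^ x1.toNat * cz12 ^ z3.toNat *
        (zxGate (xor z1 (x2 && z3)) x1 ⊗ₖ
          (zxGate (xor z2 (x1 && z3)) x2 ⊗ₖ zxGate z3 (xor x3 (x1 && x2)))) := by
  rw [toffoli_herm, toffoli_eq, cnot13_eq, cnot23_eq, cz12_eq]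
  simp only [zx_eq, gp_kron, gp_pow_bool, gp_mul]
  apply gp_congr
  · revert z1 z2 z3 x1 x2 x3
    decide
  · revert z1 z2 z3 x1 x2 x3
    decide
end
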